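/- There exists a constant C > 0 such that the following holds for every γ ∈ ℝ, all real numbers E, F ≥ 0 and all integers k₁,…,k₅: if k_max > 16·max{1, |γ|E, |γ|F}, |k₅| > 8³·max_{1≤j≤4}|k_j|, and either 16|k₁+k₂| < |k₃+k₄| or 16|k₃+k₄| < |k₁+k₂|, then Φ_{γ,E}^{(5)}(k₁,…,k₅) ≠ 0, Φ_{γ,F}^{(5)}(k₁,…,k₅) ≠ 0, |Φ_{γ,E}^{(5)}(k₁,…,k₅)| ≥ C⁻¹·max{|k₁+k₂|, |k₃+k₄|}·|k₅|⁴, and |1/Φ_{γ,E}^{(5)}(k₁,…,k₅) − 1/Φ_{γ,F}^{(5)}(k₁,…,k₅)| ≤ C·|γ|·|E−F|·k_max^{−1} · min{1/|Φ_{γ,E}^{(5)}(k₁,…,k₅)|, 1/|Φ_{γ,F}^{(5)}(k₁,…,k₅)|}. -/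

import Mathlib

/-- The linear symbol `φ_{γ,E}(k) = -i k⁵ + 2 i γ E k³`. -/
noncomputable def phiFn (γ E : ℝ) (k : ℤ) : ℂ :=
  -Complex.I * (k : ℂ) ^ 5 + 2 * Complex.I * (γ : ℂ) * (E : ℂ) * (k : ℂ) ^ 3

/-- The quintic phase function `Φ_{γ,E}^{(5)}`. -/
noncomputable def Phi5 (γ E : ℝ) (k₁ k₂ k₃ k₄ k₅ : ℤ) : ℂ :=
  phiFn γ E (k₁ + k₂ + k₃ + k₄ + k₅) -
    (phiFn γ E k₁ + phiFn γ E k₂ + phiFn γ E k₃ + phiFn γ E k₄ + phiFn γ E k₅)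


theorem Qbound (s m : ℝ) (h : 128 * |m| ≤ |s|) :
    4 * s^4 ≤ 5*s^4 + 10*s^3*m + 10*s^2*m^2 + 5*s*m^3 + m^4 := by
  have h2 : 16384 * m^2 ≤ s^2 := by nlinarith [sq_abs s, sq_abs m, abs_nonneg m, abs_nonneg s]
  have h3a : -(s^2) ≤ 128*(s*m) := by
    nlinarith [neg_abs_le (s*m), abs_mul s m, abs_nonneg s, abs_nonneg m, sq_abs s]
  nlinarith [sq_nonneg s, sq_nonneg m, sq_nonneg (s*m), mul_nonneg (sq_nonneg s) (sq_nonneg m),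
    mul_le_mul_of_nonneg_left h2 (sq_nonneg s),
    mul_nonneg (sq_nonneg s) (by linarith : (0:ℝ) ≤ 128*(s*m) + s^2),
    mul_nonneg (sq_nonneg m) (by linarith : (0:ℝ) ≤ 128*(s*m) + s^2)]

theorem Q3bound (s m : ℝ) (h : 128 * |m| ≤ |s|) : |3*s^2 + 3*(s*m) + m^2| ≤ 4 * s^2 := by
  have h2 : 16384 * m^2 ≤ s^2 := by nlinarith [sq_abs s, sq_abs m, abs_nonneg m, abs_nonneg s]
  have h3a : -(s^2) ≤ 128*(s*m) := by
    nlinarith [neg_abs_le (s*m), abs_mul s m, abs_nonneg s, abs_nonneg m, sq_abs s]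
  have h3b : 128*(s*m) ≤ s^2 := by
    nlinarith [le_abs_self (s*m), abs_mul s m, abs_nonneg s, abs_nonneg m, sq_abs s]
  rw [abs_le]; constructor <;> nlinarith [sq_nonneg s, sq_nonneg m]

theorem R5bound (x y K : ℝ) (hx : |x| ≤ K) (hy : |y| ≤ K) :
    |x^4 - x^3*y + x^2*y^2 - x*y^3 + y^4| ≤ 5 * K^4 := by
  have hK : 0 ≤ K := le_trans (abs_nonneg x) hx
  calc |x^4 - x^3*y + x^2*y^2 - x*y^3 + y^4|
      ≤ |x^4 - x^3*y + x^2*y^2 - x*y^3| + |y^4| := abs_add_le _ _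
    _ ≤ (|x^4 - x^3*y + x^2*y^2| + |x*y^3|) + |y^4| := by gcongr ?_ + _; exact abs_sub _ _
    _ ≤ ((|x^4 - x^3*y| + |x^2*y^2|) + |x*y^3|) + |y^4| := by gcongr ?_ + _ + _; exact abs_add_le _ _
    _ ≤ (((|x^4| + |x^3*y|) + |x^2*y^2|) + |x*y^3|) + |y^4| := by
        gcongr ?_ + _ + _ + _; exact abs_sub _ _
    _ = (((|x|^4 + |x|^3 * |y|) + |x|^2 * |y|^2) + |x| * |y|^3) + |y|^4 := by
        simp [abs_mul, abs_pow]
    _ ≤ (((K^4 + K^3 * K) + K^2 * K^2) + K * K^3) + K^4 := by gcongr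
    _ = 5 * K^4 := by ring

theorem R3bound (x y K : ℝ) (hx : |x| ≤ K) (hy : |y| ≤ K) :
    |x^2 - x*y + y^2| ≤ 3 * K^2 := by
  have hK : 0 ≤ K := le_trans (abs_nonneg x) hx
  calc |x^2 - x*y + y^2| ≤ |x^2 - x*y| + |y^2| := abs_add_le _ _
    _ ≤ (|x^2| + |x*y|) + |y^2| := by gcongr ?_ + _; exact abs_sub _ _
    _ = (|x|^2 + |x| * |y|) + |y|^2 := by simp [abs_mul, abs_pow]
    _ ≤ (K^2 + K * K) + K^2 := by gcongr
    _ = 3 * K^2 := by ring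

set_option maxHeartbeats 2000000 in
theorem keyR (x₁ x₂ x₃ x₄ s c K : ℝ)
    (hx₁ : |x₁| ≤ K) (hx₂ : |x₂| ≤ K) (hx₃ : |x₃| ≤ K) (hx₄ : |x₄| ≤ K)
    (hKs : 512 * K < |s|)
    (habm : |x₁+x₂| + |x₃+x₄| ≤ 2 * |(x₁+x₂) + (x₃+x₄)|)
    (h16 : (16:ℝ) < |s|) (hc : |c| * 8 ≤ |s|) :
    3 * |(x₁+x₂) + (x₃+x₄)| * s^4 ≤
      |(((x₁+x₂) + (x₃+x₄) + s)^5 - (x₁^5+x₂^5+x₃^5+x₄^5+s^5)) -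
        c * (((x₁+x₂) + (x₃+x₄) + s)^3 - (x₁^3+x₂^3+x₃^3+x₄^3+s^3))| ∧
    |((x₁+x₂) + (x₃+x₄) + s)^3 - (x₁^3+x₂^3+x₃^3+x₄^3+s^3)| ≤
      5 * |(x₁+x₂) + (x₃+x₄)| * s^2 := by
  have hK0 : 0 ≤ K := le_trans (abs_nonneg _) hx₁
  set a := x₁ + x₂ with ha
  set b := x₃ + x₄ with hb
  set m := a + b with hm
  clear_value a b m
  have hha : |a| ≤ 2*K := by rw [ha]; exact le_trans (abs_add_le _ _) (by linarith)
  have hhb : |b| ≤ 2*K := by rw [hb]; exact le_trans (abs_add_le _ _) (by linarith)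
  have hhm : |m| ≤ 4*K := by rw [hm]; exact le_trans (abs_add_le _ _) (by linarith)
  have hm128 : 128 * |m| ≤ |s| := by linarith
  have hS0 : (0:ℝ) < |s| := by linarith
  have habs4 : |s|^4 = s^4 := by rw [← abs_pow]; exact abs_of_nonneg (by positivity)
  have habs2 : |s|^2 = s^2 := sq_abs s
  have hs4 : (0:ℝ) ≤ s^4 := by positivity
  have hs2 : (0:ℝ) ≤ s^2 := sq_nonneg s
  have hK4s : 512^4 * K^4 ≤ s^4 := by
    have h1 : (512*K)^4 ≤ |s|^4 := pow_le_pow_left₀ (by positivity) (le_of_lt hKs) 4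
    calc (512:ℝ)^4*K^4 = (512*K)^4 := by ring
      _ ≤ |s|^4 := h1
      _ = s^4 := habs4
  have hK2s : 512^2 * K^2 ≤ s^2 := by
    have h1 : (512*K)^2 ≤ |s|^2 := pow_le_pow_left₀ (by positivity) (le_of_lt hKs) 2
    calc (512:ℝ)^2*K^2 = (512*K)^2 := by ring
      _ ≤ |s|^2 := h1
      _ = s^2 := habs2
  set Q := 5*s^4 + 10*s^3*m + 10*s^2*m^2 + 5*s*m^3 + m^4 with hQdef
  set Q3 := 3*s^2 + 3*(s*m) + m^2 with hQ3def
  set R1 := x₁^4 - x₁^3*x₂ + x₁^2*x₂^2 - x₁*x₂^3 + x₂^4 with hR1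
  set R2 := x₃^4 - x₃^3*x₄ + x₃^2*x₄^2 - x₃*x₄^3 + x₄^4 with hR2
  set r1 := x₁^2 - x₁*x₂ + x₂^2 with hr1
  set r2 := x₃^2 - x₃*x₄ + x₄^2 with hr2
  clear_value Q Q3 R1 R2 r1 r2
  have hQ : 4*s^4 ≤ Q := by rw [hQdef]; exact Qbound s m hm128
  have hQ0 : 0 ≤ Q := le_trans (by positivity) hQ
  have hQ3 : |Q3| ≤ 4*s^2 := by rw [hQ3def]; exact Q3bound s m hm128
  have hR1b : |R1| ≤ 5*K^4 := by rw [hR1]; exact R5bound _ _ _ hx₁ hx₂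
  have hR2b : |R2| ≤ 5*K^4 := by rw [hR2]; exact R5bound _ _ _ hx₃ hx₄
  have hr1b : |r1| ≤ 3*K^2 := by rw [hr1]; exact R3bound _ _ _ hx₁ hx₂
  have hr2b : |r2| ≤ 3*K^2 := by rw [hr2]; exact R3bound _ _ _ hx₃ hx₄
  have hid3 : (m + s)^3 - (x₁^3+x₂^3+x₃^3+x₄^3+s^3) = m*Q3 - a*r1 - b*r2 := by
    rw [hQ3def, hr1, hr2, hm, ha, hb]; ring
  -- p3 bound
  have hp3 : |(m + s)^3 - (x₁^3+x₂^3+x₃^3+x₄^3+s^3)| ≤ 5* |m| *s^2 := by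
    rw [hid3]
    have t1 : |m*Q3 - a*r1 - b*r2| ≤ |m| * |Q3| + |a| * |r1| + |b| * |r2| := by
      calc |m*Q3 - a*r1 - b*r2| ≤ |m*Q3 - a*r1| + |b*r2| := abs_sub _ _
        _ ≤ (|m*Q3| + |a*r1|) + |b*r2| := by gcongr ?_ + _; exact abs_sub _ _
        _ = |m| * |Q3| + |a| * |r1| + |b| * |r2| := by rw [abs_mul, abs_mul, abs_mul]
    have t2 : |m| * |Q3| ≤ |m| *(4*s^2) := mul_le_mul_of_nonneg_left hQ3 (abs_nonneg m)
    have t3 : |a| * |r1| ≤ |a| *(3*K^2) := mul_le_mul_of_nonneg_left hr1b (abs_nonneg a)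
    have t4 : |b| * |r2| ≤ |b| *(3*K^2) := mul_le_mul_of_nonneg_left hr2b (abs_nonneg b)
    have t5 : (|a|+|b|)*(3*K^2) ≤ (2* |m|)*(3*K^2) :=
      mul_le_mul_of_nonneg_right habm (by positivity)
    have t6 : 6*K^2 ≤ s^2 := by linarith [hK2s, sq_nonneg K]
    have t7 : (2* |m|)*(3*K^2) ≤ |m| *s^2 := by
      linarith [mul_nonneg (abs_nonneg m) (sub_nonneg.2 t6)]
    linarith [t1, t2, t3, t4, t5, t7]
  refine ⟨?_, hp3⟩
  -- lower bound on the combination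
  have hcs : |c| ≤ |s|/8 := by linarith
  have h163 : 16*(s^2* |s|) ≤ s^4 := by
    have e : s^2* |s|^2 = s^4 := by rw [habs2]; ring
    linarith [mul_nonneg (mul_nonneg hs2 (abs_nonneg s)) (by linarith : (0:ℝ) ≤ |s| - 16), e]
  have hcp3 : |c| * |m*Q3 - a*r1 - b*r2| ≤ (5/8)* |m| *(s^2* |s|) := by
    rw [← hid3]
    calc |c| * |(m + s)^3 - (x₁^3+x₂^3+x₃^3+x₄^3+s^3)| ≤ (|s|/8) * (5* |m| *s^2) :=
          mul_le_mul hcs hp3 (abs_nonneg _) (by positivity)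
      _ = (5/8)* |m| *(s^2* |s|) := by ring
  have hcp3' : |c| * |m*Q3 - a*r1 - b*r2| ≤ (1/2)* |m| *s^4 := by
    have : (5/8)* |m| *(s^2* |s|) ≤ (1/2)* |m| *s^4 := by
      linarith [mul_nonneg (abs_nonneg m) (by linarith : (0:ℝ) ≤ s^4 - 16*(s^2* |s|)),
        mul_nonneg (abs_nonneg m) (mul_nonneg hs2 (abs_nonneg s))]
    linarith
  have hE2 : |a*R1 + b*R2 + c*(m*Q3 - a*r1 - b*r2)| ≤ |m| *s^4 := by
    have u1 : |a*R1 + b*R2 + c*(m*Q3 - a*r1 - b*r2)| ≤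
        |a| * |R1| + |b| * |R2| + |c| * |m*Q3 - a*r1 - b*r2| := by
      calc |a*R1 + b*R2 + c*(m*Q3 - a*r1 - b*r2)|
          ≤ |a*R1 + b*R2| + |c*(m*Q3 - a*r1 - b*r2)| := abs_add_le _ _
        _ ≤ (|a*R1| + |b*R2|) + |c*(m*Q3 - a*r1 - b*r2)| := by gcongr ?_ + _; exact abs_add_le _ _
        _ = |a| * |R1| + |b| * |R2| + |c| * |m*Q3 - a*r1 - b*r2| := by
            rw [abs_mul, abs_mul, abs_mul]
    have u2 : |a| * |R1| ≤ |a| *(5*K^4) := mul_le_mul_of_nonneg_left hR1b (abs_nonneg a)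
    have u3 : |b| * |R2| ≤ |b| *(5*K^4) := mul_le_mul_of_nonneg_left hR2b (abs_nonneg b)
    have u4 : (|a|+|b|)*(5*K^4) ≤ (2* |m|)*(5*K^4) :=
      mul_le_mul_of_nonneg_right habm (by positivity)
    have u5 : 20*K^4 ≤ s^4 := by linarith [hK4s, pow_nonneg hK0 4]
    have u6 : (2* |m|)*(5*K^4) ≤ (1/2)* |m| *s^4 := by
      linarith [mul_nonneg (abs_nonneg m) (sub_nonneg.2 u5), mul_nonneg (abs_nonneg m) (pow_nonneg hK0 4)]
    linarith
  have key5 : (((m + s)^5 - (x₁^5+x₂^5+x₃^5+x₄^5+s^5)) -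
      c * ((m + s)^3 - (x₁^3+x₂^3+x₃^3+x₄^3+s^3))) =
      m*Q - (a*R1 + b*R2 + c*(m*Q3 - a*r1 - b*r2)) := by
    rw [hQdef, hQ3def, hR1, hR2, hr1, hr2, hm, ha, hb]; ring
  rw [key5]
  have v1 : |m*Q| - |a*R1 + b*R2 + c*(m*Q3 - a*r1 - b*r2)| ≤
      |m*Q - (a*R1 + b*R2 + c*(m*Q3 - a*r1 - b*r2))| := abs_sub_abs_le_abs_sub _ _
  have v2 : |m*Q| = |m| *Q := by rw [abs_mul, abs_of_nonneg hQ0]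
  have v3 : |m| *(4*s^4) ≤ |m| *Q := mul_le_mul_of_nonneg_left hQ (abs_nonneg m)
  linarith [v1, v2, v3, hE2]

def p3 (k₁ k₂ k₃ k₄ k₅ : ℤ) : ℤ :=
  (k₁+k₂+k₃+k₄+k₅)^3 - (k₁^3+k₂^3+k₃^3+k₄^3+k₅^3)

def p5 (k₁ k₂ k₃ k₄ k₅ : ℤ) : ℤ :=
  (k₁+k₂+k₃+k₄+k₅)^5 - (k₁^5+k₂^5+k₃^5+k₄^5+k₅^5)

theorem Phi5_repr (γ E : ℝ) (k₁ k₂ k₃ k₄ k₅ : ℤ) :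
    Phi5 γ E k₁ k₂ k₃ k₄ k₅ =
      Complex.I * ((2*γ*E*((p3 k₁ k₂ k₃ k₄ k₅ : ℤ):ℝ) - ((p5 k₁ k₂ k₃ k₄ k₅ : ℤ):ℝ) : ℝ) : ℂ) := by
  simp only [Phi5, phiFn, p3, p5]
  push_cast
  ring

theorem Phi5_abs (γ E : ℝ) (k₁ k₂ k₃ k₄ k₅ : ℤ) :
    ‖Phi5 γ E k₁ k₂ k₃ k₄ k₅‖ =
      |((p5 k₁ k₂ k₃ k₄ k₅ : ℤ):ℝ) - 2*γ*E*((p3 k₁ k₂ k₃ k₄ k₅ : ℤ):ℝ)| := by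
  rw [Phi5_repr, norm_mul, Complex.norm_I, one_mul, Complex.norm_real, Real.norm_eq_abs, abs_sub_comm]

theorem Phi5_sub (γ E F : ℝ) (k₁ k₂ k₃ k₄ k₅ : ℤ) :
    ‖Phi5 γ F k₁ k₂ k₃ k₄ k₅ - Phi5 γ E k₁ k₂ k₃ k₄ k₅‖ =
      2 * |γ| * |E - F| * |((p3 k₁ k₂ k₃ k₄ k₅ : ℤ):ℝ)| := by
  rw [Phi5_repr, Phi5_repr, ← mul_sub, norm_mul, Complex.norm_I, one_mul, ← Complex.ofReal_sub,
    Complex.norm_real, Real.norm_eq_abs]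
  rw [show 2*γ*F*((p3 k₁ k₂ k₃ k₄ k₅ : ℤ):ℝ) - ((p5 k₁ k₂ k₃ k₄ k₅ : ℤ):ℝ) -
      (2*γ*E*((p3 k₁ k₂ k₃ k₄ k₅ : ℤ):ℝ) - ((p5 k₁ k₂ k₃ k₄ k₅ : ℤ):ℝ)) =
      2 * γ * -(E - F) * ((p3 k₁ k₂ k₃ k₄ k₅ : ℤ):ℝ) by ring]
  rw [abs_mul, abs_mul, abs_mul, abs_neg]
  simp [abs_of_nonneg]

theorem intFacts (a b : ℤ) (h : 16 * |a| < |b| ∨ 16 * |b| < |a|) :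
    1 ≤ max |a| |b| ∧ max |a| |b| ≤ 2 * |a + b| ∧ |a| + |b| ≤ 2 * |a + b| := by
  rcases abs_cases a with ⟨h1,h2⟩|⟨h1,h2⟩ <;> rcases abs_cases b with ⟨h3,h4⟩|⟨h3,h4⟩ <;>
    rcases abs_cases (a+b) with ⟨h5,h6⟩|⟨h5,h6⟩ <;> omega

theorem maxall (k₁ k₂ k₃ k₄ k₅ : ℤ) (h : 512 * max |k₁| (max |k₂| (max |k₃| |k₄|)) < |k₅|) :
    max |k₁| (max |k₂| (max |k₃| (max |k₄| |k₅|))) = |k₅| := by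
  have e1 : |k₁| ≤ max |k₁| (max |k₂| (max |k₃| |k₄|)) := le_max_left _ _
  have e2 : |k₂| ≤ max |k₁| (max |k₂| (max |k₃| |k₄|)) :=
    le_trans (le_max_left _ _) (le_max_right _ _)
  have e3 : |k₃| ≤ max |k₁| (max |k₂| (max |k₃| |k₄|)) :=
    le_trans (le_trans (le_max_left _ _) (le_max_right _ _)) (le_max_right _ _)
  have e4 : |k₄| ≤ max |k₁| (max |k₂| (max |k₃| |k₄|)) :=
    le_trans (le_trans (le_max_right _ _) (le_max_right _ _)) (le_max_right _ _)
  have e0 : 0 ≤ max |k₁| (max |k₂| (max |k₃| |k₄|)) := le_trans (abs_nonneg _) e1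
  rw [max_eq_right (by omega : |k₄| ≤ |k₅|), max_eq_right (by omega : |k₃| ≤ |k₅|),
      max_eq_right (by omega : |k₂| ≤ |k₅|), max_eq_right (by omega : |k₁| ≤ |k₅|)]

theorem assemble (X Y S D P : ℝ) (hX : 0 < X) (hY : 0 < Y) (hS : 0 < S)
    (hDX : D * S ≤ P * X) (hDY : D * S ≤ P * Y) :
    D / (X * Y) ≤ P * S⁻¹ * min X⁻¹ Y⁻¹ := by
  rcases le_total X Y with h | h
  · have hmin : min X⁻¹ Y⁻¹ = Y⁻¹ := min_eq_right (by
      exact inv_anti₀ hX h)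
    rw [hmin, div_le_iff₀ (by positivity)]
    have e : P * S⁻¹ * Y⁻¹ * (X * Y) = (P * X) / S := by
      field_simp
    rw [e, le_div_iff₀ hS]
    exact hDX
  · have hmin : min X⁻¹ Y⁻¹ = X⁻¹ := min_eq_left (by
      exact inv_anti₀ hY h)
    rw [hmin, div_le_iff₀ (by positivity)]
    have e : P * S⁻¹ * X⁻¹ * (X * Y) = (P * Y) / S := by
      field_simp
    rw [e, le_div_iff₀ hS]
    exact hDY

set_option maxHeartbeats 2000000 in
theorem stmt5 :
    ∃ C : ℝ, 0 < C ∧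
      ∀ (γ E F : ℝ) (k₁ k₂ k₃ k₄ k₅ : ℤ), 0 ≤ E → 0 ≤ F →
        ((max |k₁| (max |k₂| (max |k₃| (max |k₄| |k₅|))) : ℤ) : ℝ) >
          16 * max 1 (max (|γ| * E) (|γ| * F)) →
        |k₅| > 8 ^ 3 * max |k₁| (max |k₂| (max |k₃| |k₄|)) →
        (16 * |k₁ + k₂| < |k₃ + k₄| ∨ 16 * |k₃ + k₄| < |k₁ + k₂|) →
        Phi5 γ E k₁ k₂ k₃ k₄ k₅ ≠ 0 ∧ Phi5 γ F k₁ k₂ k₃ k₄ k₅ ≠ 0 ∧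
        C⁻¹ * ((max |k₁ + k₂| |k₃ + k₄| : ℤ) : ℝ) * ((|k₅| : ℤ) : ℝ) ^ 4 ≤
          ‖Phi5 γ E k₁ k₂ k₃ k₄ k₅‖ ∧
        ‖(Phi5 γ E k₁ k₂ k₃ k₄ k₅)⁻¹ - (Phi5 γ F k₁ k₂ k₃ k₄ k₅)⁻¹‖ ≤
          C * |γ| * |E - F| * (((max |k₁| (max |k₂| (max |k₃| (max |k₄| |k₅|))) : ℤ) : ℝ))⁻¹ *
            min (‖Phi5 γ E k₁ k₂ k₃ k₄ k₅‖)⁻¹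
              (‖Phi5 γ F k₁ k₂ k₃ k₄ k₅‖)⁻¹ := by
  refine ⟨1, one_pos, ?_⟩
  intro γ E F k₁ k₂ k₃ k₄ k₅ hE hF hbig h5 hsep
  have h5' : 512 * max |k₁| (max |k₂| (max |k₃| |k₄|)) < |k₅| := by
    have e : (8:ℤ)^3 = 512 := by norm_num
    rw [e] at h5; exact h5
  have hmaxeq := maxall k₁ k₂ k₃ k₄ k₅ h5'
  rw [hmaxeq] at hbig ⊢
  set x₁ := (k₁:ℝ) with hx1d
  set x₂ := (k₂:ℝ) with hx2d
  set x₃ := (k₃:ℝ) with hx3d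
  set x₄ := (k₄:ℝ) with hx4d
  set s := (k₅:ℝ) with hsd
  have hcast5 : ((|k₅| : ℤ) : ℝ) = |s| := by rw [hsd]; push_cast; rfl
  rw [hcast5]
  set Kr : ℝ := ((max |k₁| (max |k₂| (max |k₃| |k₄|)) : ℤ) : ℝ) with hKrd
  have hbig' : 16 * max 1 (max (|γ| * E) (|γ| * F)) < |s| := by rw [← hcast5]; exact hbig
  have hS16 : (16:ℝ) < |s| := by
    have := le_max_left (1:ℝ) (max (|γ| * E) (|γ| * F))
    nlinarith [hbig']
  have hγE : 16 * (|γ| * E) < |s| := by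
    have := le_trans (le_max_left (|γ| * E) (|γ| * F)) (le_max_right 1 _)
    nlinarith [hbig']
  have hγF : 16 * (|γ| * F) < |s| := by
    have := le_trans (le_max_right (|γ| * E) (|γ| * F)) (le_max_right 1 _)
    nlinarith [hbig']
  have hcE : |2*γ*E| * 8 ≤ |s| := by
    have e : |2*γ*E| = 2 * (|γ| * E) := by
      rw [abs_mul, abs_mul, abs_of_nonneg hE, abs_two]; ring
    rw [e]; linarith
  have hcF : |2*γ*F| * 8 ≤ |s| := by
    have e : |2*γ*F| = 2 * (|γ| * F) := by
      rw [abs_mul, abs_mul, abs_of_nonneg hF, abs_two]; ring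
    rw [e]; linarith
  -- integer facts
  obtain ⟨hM1, hM2, habm_int⟩ := intFacts (k₁+k₂) (k₃+k₄) hsep
  have hsum_eq : k₁+k₂+k₃+k₄ = (k₁+k₂)+(k₃+k₄) := by ring
  rw [← hsum_eq] at hM2 habm_int
  -- real versions
  have hxb₁ : |x₁| ≤ Kr := by
    rw [hKrd, show |x₁| = ((|k₁| : ℤ):ℝ) by rw [hx1d]; push_cast; rfl]
    exact_mod_cast le_max_left _ _
  have hxb₂ : |x₂| ≤ Kr := by
    rw [hKrd, show |x₂| = ((|k₂| : ℤ):ℝ) by rw [hx2d]; push_cast; rfl]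
    exact_mod_cast le_trans (le_max_left _ _) (le_max_right _ _)
  have hxb₃ : |x₃| ≤ Kr := by
    rw [hKrd, show |x₃| = ((|k₃| : ℤ):ℝ) by rw [hx3d]; push_cast; rfl]
    exact_mod_cast le_trans (le_trans (le_max_left _ _) (le_max_right _ _)) (le_max_right _ _)
  have hxb₄ : |x₄| ≤ Kr := by
    rw [hKrd, show |x₄| = ((|k₄| : ℤ):ℝ) by rw [hx4d]; push_cast; rfl]
    exact_mod_cast le_trans (le_trans (le_max_right _ _) (le_max_right _ _)) (le_max_right _ _)
  have hKs : 512 * Kr < |s| := by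
    rw [hKrd, show |s| = ((|k₅| : ℤ):ℝ) from hcast5.symm]
    exact_mod_cast h5'
  have hmeq : (x₁+x₂)+(x₃+x₄) = ((k₁+k₂+k₃+k₄ : ℤ):ℝ) := by
    rw [hx1d, hx2d, hx3d, hx4d]; push_cast; ring
  have habsm : |(x₁+x₂)+(x₃+x₄)| = ((|k₁+k₂+k₃+k₄| : ℤ):ℝ) := by
    rw [hmeq, Int.cast_abs]
  have habmR : |x₁+x₂| + |x₃+x₄| ≤ 2 * |(x₁+x₂)+(x₃+x₄)| := by
    rw [habsm, show |x₁+x₂| = ((|k₁+k₂| : ℤ):ℝ) by rw [hx1d, hx2d]; push_cast; ring,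
      show |x₃+x₄| = ((|k₃+k₄| : ℤ):ℝ) by rw [hx3d, hx4d]; push_cast; ring]
    exact_mod_cast habm_int
  have hM2R : ((max |k₁+k₂| |k₃+k₄| : ℤ):ℝ) ≤ 2 * |(x₁+x₂)+(x₃+x₄)| := by
    rw [habsm]; exact_mod_cast hM2
  have hM1R : (1:ℝ) ≤ ((max |k₁+k₂| |k₃+k₄| : ℤ):ℝ) := by exact_mod_cast hM1
  -- key estimates
  obtain ⟨hlowE, hp3E⟩ := keyR x₁ x₂ x₃ x₄ s (2*γ*E) Kr hxb₁ hxb₂ hxb₃ hxb₄ hKs habmR hS16 hcE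
  obtain ⟨hlowF, _⟩ := keyR x₁ x₂ x₃ x₄ s (2*γ*F) Kr hxb₁ hxb₂ hxb₃ hxb₄ hKs habmR hS16 hcF
  -- cast bridges
  have ep5 : ((p5 k₁ k₂ k₃ k₄ k₅ : ℤ):ℝ) =
      ((x₁+x₂) + (x₃+x₄) + s)^5 - (x₁^5+x₂^5+x₃^5+x₄^5+s^5) := by
    simp only [p5, hx1d, hx2d, hx3d, hx4d, hsd]; push_cast; ring
  have ep3 : ((p3 k₁ k₂ k₃ k₄ k₅ : ℤ):ℝ) =
      ((x₁+x₂) + (x₃+x₄) + s)^3 - (x₁^3+x₂^3+x₃^3+x₄^3+s^3) := by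
    simp only [p3, hx1d, hx2d, hx3d, hx4d, hsd]; push_cast; ring
  have habsE : ‖Phi5 γ E k₁ k₂ k₃ k₄ k₅‖ =
      |(((x₁+x₂) + (x₃+x₄) + s)^5 - (x₁^5+x₂^5+x₃^5+x₄^5+s^5)) -
        (2*γ*E) * (((x₁+x₂) + (x₃+x₄) + s)^3 - (x₁^3+x₂^3+x₃^3+x₄^3+s^3))| := by
    rw [Phi5_abs, ep5, ep3]
  have habsF : ‖Phi5 γ F k₁ k₂ k₃ k₄ k₅‖ =
      |(((x₁+x₂) + (x₃+x₄) + s)^5 - (x₁^5+x₂^5+x₃^5+x₄^5+s^5)) -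
        (2*γ*F) * (((x₁+x₂) + (x₃+x₄) + s)^3 - (x₁^3+x₂^3+x₃^3+x₄^3+s^3))| := by
    rw [Phi5_abs, ep5, ep3]
  -- basic positivity
  have hs0 : s ≠ 0 := by
    intro h; rw [h] at hS16; simp at hS16; linarith
  have hs4 : (0:ℝ) < s^4 := by positivity
  have habs4 : |s|^4 = s^4 := by rw [← abs_pow]; exact abs_of_nonneg (by positivity)
  have hm0 : (0:ℝ) ≤ |(x₁+x₂)+(x₃+x₄)| := abs_nonneg _
  -- lower bounds on Phi
  have hXlow : 3 * |(x₁+x₂)+(x₃+x₄)| * s^4 ≤ ‖Phi5 γ E k₁ k₂ k₃ k₄ k₅‖ := by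
    rw [habsE]; exact hlowE
  have hYlow : 3 * |(x₁+x₂)+(x₃+x₄)| * s^4 ≤ ‖Phi5 γ F k₁ k₂ k₃ k₄ k₅‖ := by
    rw [habsF]; exact hlowF
  have hmlow : (1:ℝ)/2 ≤ |(x₁+x₂)+(x₃+x₄)| := by linarith [hM1R, hM2R]
  have hmlow4 : (1:ℝ)/2 * s^4 ≤ |(x₁+x₂)+(x₃+x₄)| * s^4 :=
    mul_le_mul_of_nonneg_right hmlow (le_of_lt hs4)
  have hXpos : 0 < ‖Phi5 γ E k₁ k₂ k₃ k₄ k₅‖ := by linarith [hXlow, hmlow4, hs4]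
  have hYpos : 0 < ‖Phi5 γ F k₁ k₂ k₃ k₄ k₅‖ := by linarith [hYlow, hmlow4, hs4]
  have hXne : Phi5 γ E k₁ k₂ k₃ k₄ k₅ ≠ 0 := norm_pos_iff.mp hXpos
  have hYne : Phi5 γ F k₁ k₂ k₃ k₄ k₅ ≠ 0 := norm_pos_iff.mp hYpos
  refine ⟨hXne, hYne, ?_, ?_⟩
  · -- lower bound with C = 1
    rw [inv_one, one_mul, habs4]
    have w1 : ((max |k₁+k₂| |k₃+k₄| : ℤ):ℝ) * s^4 ≤ (2 * |(x₁+x₂)+(x₃+x₄)|) * s^4 :=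
      mul_le_mul_of_nonneg_right hM2R (le_of_lt hs4)
    have w2 : (0:ℝ) ≤ |(x₁+x₂)+(x₃+x₄)| * s^4 := mul_nonneg hm0 (le_of_lt hs4)
    linarith [hXlow, w1, w2]
  · -- difference bound
    have hinv : (Phi5 γ E k₁ k₂ k₃ k₄ k₅)⁻¹ - (Phi5 γ F k₁ k₂ k₃ k₄ k₅)⁻¹ =
        (Phi5 γ F k₁ k₂ k₃ k₄ k₅ - Phi5 γ E k₁ k₂ k₃ k₄ k₅) /
          (Phi5 γ E k₁ k₂ k₃ k₄ k₅ * Phi5 γ F k₁ k₂ k₃ k₄ k₅) := by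
      exact inv_sub_inv hXne hYne
    rw [hinv, norm_div, norm_mul]
    have hSpos : (0:ℝ) < |s| := by linarith
    apply assemble _ _ _ _ _ hXpos hYpos hSpos
    all_goals {
      -- D * S ≤ P * X (resp Y)
      have hD : ‖Phi5 γ F k₁ k₂ k₃ k₄ k₅ - Phi5 γ E k₁ k₂ k₃ k₄ k₅‖ ≤
          2 * |γ| * |E - F| * (5 * |(x₁+x₂)+(x₃+x₄)| * s^2) := by
        rw [Phi5_sub, ep3]
        exact mul_le_mul_of_nonneg_left hp3E (by positivity)
      have hs2S : s^2 * |s| * 16 ≤ s^4 := by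
        have e : s^2 * |s|^2 = s^4 := by rw [sq_abs]; ring
        linarith [mul_nonneg (mul_nonneg (sq_nonneg s) (abs_nonneg s))
          (by linarith : (0:ℝ) ≤ |s| - 16), e]
      have hprod : (2 * |γ| * |E - F| * (5 * |(x₁+x₂)+(x₃+x₄)| * s^2)) * |s| ≤
          (1 * |γ| * |E - F|) * (3 * |(x₁+x₂)+(x₃+x₄)| * s^4) := by
        have w : 10 * (|(x₁+x₂)+(x₃+x₄)| * (s^2 * |s|)) ≤ 3 * (|(x₁+x₂)+(x₃+x₄)| * s^4) := by
          linarith [mul_nonneg hm0 (by linarith : (0:ℝ) ≤ s^4 - s^2 * |s| * 16),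
            mul_nonneg hm0 (mul_nonneg (sq_nonneg s) (abs_nonneg s))]
        calc (2 * |γ| * |E - F| * (5 * |(x₁+x₂)+(x₃+x₄)| * s^2)) * |s|
            = (|γ| * |E - F|) * (10 * (|(x₁+x₂)+(x₃+x₄)| * (s^2 * |s|))) := by ring
          _ ≤ (|γ| * |E - F|) * (3 * (|(x₁+x₂)+(x₃+x₄)| * s^4)) :=
              mul_le_mul_of_nonneg_left w (by positivity)
          _ = (1 * |γ| * |E - F|) * (3 * |(x₁+x₂)+(x₃+x₄)| * s^4) := by ring
      calc ‖Phi5 γ F k₁ k₂ k₃ k₄ k₅ - Phi5 γ E k₁ k₂ k₃ k₄ k₅‖ * |s|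
          ≤ (2 * |γ| * |E - F| * (5 * |(x₁+x₂)+(x₃+x₄)| * s^2)) * |s| :=
            mul_le_mul_of_nonneg_right hD (abs_nonneg s)
        _ ≤ (1 * |γ| * |E - F|) * (3 * |(x₁+x₂)+(x₃+x₄)| * s^4) := hprod
        _ ≤ _ := by
            apply mul_le_mul_of_nonneg_left _ (by positivity)
            first
              | exact hXlow
              | exact hYlow
    }
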